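/- arXiv:1108.4270 — 4 statements merged into one kernel-verified Lean document; each statement's English description precedes it below -/
import Mathlib

section
/- For every integer k ≥ 0, every real s ≥ 0, and all real α > 0, β > 0, the marginal model integral satisfies ∫_0^∞ Poi(k|s+b) · Ga(b|α,β) db = ∑_{n=0}^{k} (e^{−s} s^{k−n}/(k−n)!) · (β^α · Γ(α+n) / (n! · Γ(α) · (1+β)^{α+n})); that is, the marginal probability of k counts is the convolution of the Poisson distribution with mean s and the Poisson–Gamma (negative binomial) distribution with parameters α, β. -/
/-!
Expanding `(s + b) ^ k` binomially splits the Poisson mass at `s + b` into the convolution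
`Poi(k|s+b) = ∑ₙ Poi(k-n|s) Poi(n|b)`. Integrating term by term against the Gamma density, the
factor `e^{-b} b^n` merges with `b^{α-1} e^{-βb}` into an unnormalised Gamma density of shape
`α + n` and rate `1 + β`, whose integral is `Γ(α + n) / (1 + β)^{α + n}`.
-/

open Real MeasureTheory Set Finset
open scoped Nat

lemma poisson_add_eq_sum (k : ℕ) (s b : ℝ) :
    exp (-(s + b)) * (s + b) ^ k / k ! =
      ∑ n ∈ range (k + 1), (exp (-s) * s ^ (k - n) / (k - n)!) * (exp (-b) * b ^ n / n !) := by
  rw [add_comm s b, add_pow, mul_sum, sum_div]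
  refine sum_congr rfl fun n hn => ?_
  rw [Nat.cast_choose ℝ (Nat.lt_succ_iff.mp (mem_range.mp hn)), neg_add, exp_add]
  field_simp

lemma poisson_mul_gamma_eq_gamma_kernel (n : ℕ) (α β : ℝ) {b : ℝ} (hb : 0 < b) :
    (exp (-b) * b ^ n / n !) * (β ^ α / Gamma α * b ^ (α - 1) * exp (-β * b)) =
      β ^ α / (n ! * Gamma α) * (b ^ (α + n - 1) * exp (-((1 + β) * b))) := by
  rw [show α + n - 1 = α - 1 + n by ring, rpow_add hb, rpow_natCast,
    show -((1 + β) * b) = -b + -β * b by ring, exp_add]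
  ring

lemma integral_poisson_mul_gamma (n : ℕ) {α β : ℝ} (hα : 0 < α) (hβ : 0 < β) :
    ∫ b in Ioi 0, (exp (-b) * b ^ n / n !) * (β ^ α / Gamma α * b ^ (α - 1) * exp (-β * b)) =
      β ^ α * Gamma (α + n) / (n ! * Gamma α * (1 + β) ^ (α + n)) := by
  have h1β : 0 < 1 + β := by linarith
  rw [setIntegral_congr_fun measurableSet_Ioi fun b hb =>
      poisson_mul_gamma_eq_gamma_kernel n α β hb,
    integral_const_mul, integral_rpow_mul_exp_neg_mul_Ioi (by positivity) h1β,
    div_rpow zero_le_one h1β.le, one_rpow]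
  field_simp

lemma integrableOn_poisson_mul_gamma (n : ℕ) {α β : ℝ} (hα : 0 < α) (hβ : 0 < β) :
    IntegrableOn
      (fun b => (exp (-b) * b ^ n / n !) * (β ^ α / Gamma α * b ^ (α - 1) * exp (-β * b)))
      (Ioi 0) := by
  have hgamma : IntegrableOn (fun b : ℝ => b ^ (α + n - 1) * exp (-((1 + β) * b))) (Ioi 0) := by
    simpa only [rpow_one, neg_mul] using integrableOn_rpow_mul_exp_neg_mul_rpow (p := 1)
      (s := α + n - 1) (b := 1 + β) (by linarith [n.cast_nonneg (α := ℝ)]) one_pos (by linarith)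
  exact IntegrableOn.congr_fun (hgamma.const_mul _)
    (fun b hb => (poisson_mul_gamma_eq_gamma_kernel n α β hb).symm) measurableSet_Ioi

theorem statement4_general (k : ℕ) (s : ℝ) (α β : ℝ) (hα : 0 < α) (hβ : 0 < β) :
    ∫ b in Set.Ioi (0 : ℝ),
        (Real.exp (-(s + b)) * (s + b) ^ k / (k.factorial : ℝ)) *
          (β ^ α / Real.Gamma α * b ^ (α - 1) * Real.exp (-β * b)) =
      ∑ n ∈ Finset.range (k + 1),
        (Real.exp (-s) * s ^ (k - n) / ((k - n).factorial : ℝ)) *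
          (β ^ α * Real.Gamma (α + n) /
            ((n.factorial : ℝ) * Real.Gamma α * (1 + β) ^ (α + n))) := by
  simp_rw [poisson_add_eq_sum, sum_mul, mul_assoc (exp (-s) * _ / _)]
  rw [integral_finsetSum _ fun n _ => (integrableOn_poisson_mul_gamma n hα hβ).const_mul _]
  refine sum_congr rfl fun n _ => ?_
  rw [integral_const_mul, integral_poisson_mul_gamma n hα hβ]

theorem statement4 (k : ℕ) (s : ℝ) (hs : 0 ≤ s) (α β : ℝ) (hα : 0 < α) (hβ : 0 < β) :
    ∫ b in Set.Ioi (0 : ℝ),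
        (Real.exp (-(s + b)) * (s + b) ^ k / (k.factorial : ℝ)) *
          (β ^ α / Real.Gamma α * b ^ (α - 1) * Real.exp (-β * b)) =
      ∑ n ∈ Finset.range (k + 1),
        (Real.exp (-s) * s ^ (k - n) / ((k - n).factorial : ℝ)) *
          (β ^ α * Real.Gamma (α + n) /
            ((n.factorial : ℝ) * Real.Gamma α * (1 + β) ^ (α + n))) :=
  statement4_general k s α β hα hβ
end

section
/- For every integer k ≥ 0, every real s ≥ 0, and all real α > 0, β > 0, the marginal model integral has the closed form ∫_0^∞ Poi(k|s+b) · Ga(b|α,β) db = (β/(1+β))^α · e^{−s} · f(s;k,α,β). -/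
/-!
Expanding `(s + b)^k` binomially and merging the exponentials, the integrand becomes a finite
combination of the Gamma kernels `b^(α+n-1) e^{-(1+β)b}`, whose integrals are
`Γ(α+n) / (1+β)^(α+n)`; collecting the constants term by term gives `f`.
-/

/-- The polynomial `f(s;k,α,β)`. -/
noncomputable def f (s : ℝ) (k : ℕ) (α β : ℝ) : ℝ :=
  ∑ n ∈ Finset.range (k + 1),
    (Real.Gamma (α + n) / Real.Gamma α) * s ^ (k - n) /
      ((n.factorial : ℝ) * ((k - n).factorial : ℝ) * (1 + β) ^ n)

open Real MeasureTheory Finset Nat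

lemma integrableOn_rpow_mul_exp_neg_mul_Ioi {a r : ℝ} (ha : 0 < a) (hr : 0 < r) :
    IntegrableOn (fun t : ℝ => t ^ (a - 1) * exp (-(r * t))) (Set.Ioi 0) :=
  .of_integral_ne_zero (by rw [integral_rpow_mul_exp_neg_mul_Ioi ha hr]; positivity)

lemma add_pow_mul_rpow_eq_sum {t : ℝ} (ht : 0 < t) (s a : ℝ) (k : ℕ) :
    (s + t) ^ k * t ^ (a - 1) =
      ∑ n ∈ range (k + 1), k.choose n * s ^ (k - n) * t ^ (a + n - 1) := by
  rw [add_comm s t, add_pow, sum_mul]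
  refine sum_congr rfl fun n _ => ?_
  rw [show a + n - 1 = (a - 1) + n by ring, rpow_add ht, rpow_natCast]
  ring

lemma integral_add_pow_mul_rpow_mul_exp_neg_mul_Ioi (s : ℝ) (k : ℕ) {a r : ℝ} (ha : 0 < a)
    (hr : 0 < r) :
    ∫ t in Set.Ioi 0, (s + t) ^ k * t ^ (a - 1) * exp (-(r * t)) =
      ∑ n ∈ range (k + 1), k.choose n * s ^ (k - n) * ((1 / r) ^ (a + n) * Gamma (a + n)) := by
  have hshift : ∀ n : ℕ, 0 < a + n := fun n => by positivity
  calc ∫ t in Set.Ioi 0, (s + t) ^ k * t ^ (a - 1) * exp (-(r * t))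
      = ∫ t in Set.Ioi 0, ∑ n ∈ range (k + 1),
          k.choose n * s ^ (k - n) * (t ^ (a + n - 1) * exp (-(r * t))) := by
        refine setIntegral_congr_fun measurableSet_Ioi fun t ht => ?_
        simp only [add_pow_mul_rpow_eq_sum ht, sum_mul, mul_assoc]
    _ = ∑ n ∈ range (k + 1), k.choose n * s ^ (k - n) * ((1 / r) ^ (a + n) * Gamma (a + n)) := by
        rw [integral_finsetSum _ fun n _ =>
          (integrableOn_rpow_mul_exp_neg_mul_Ioi (hshift n) hr).const_mul _]
        refine sum_congr rfl fun n _ => ?_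
        rw [integral_const_mul, integral_rpow_mul_exp_neg_mul_Ioi (hshift n) hr]

lemma poisson_mul_gamma_eq (s b : ℝ) (k : ℕ) (α β : ℝ) :
    (exp (-(s + b)) * (s + b) ^ k / k !) * (β ^ α / Gamma α * b ^ (α - 1) * exp (-β * b)) =
      exp (-s) * (β ^ α / (Gamma α * k !)) *
        ((s + b) ^ k * b ^ (α - 1) * exp (-((1 + β) * b))) := by
  have hexp : exp (-(s + b)) * exp (-β * b) = exp (-s) * exp (-((1 + β) * b)) := by
    rw [← exp_add, ← exp_add]; ring_nf
  calc _ = β ^ α / (Gamma α * k !) * ((s + b) ^ k * b ^ (α - 1)) *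
        (exp (-(s + b)) * exp (-β * b)) := by ring
    _ = _ := by rw [hexp]; ring

lemma choose_mul_rpow_mul_Gamma_eq {n k : ℕ} (hnk : n ≤ k) (s : ℝ) {α β r : ℝ} (hα : 0 < α)
    (hβ : 0 ≤ β) (hr : 0 < r) :
    β ^ α / (Gamma α * k !) * (k.choose n * s ^ (k - n) * ((1 / r) ^ (α + n) * Gamma (α + n))) =
      (β / r) ^ α * (Gamma (α + n) / Gamma α * s ^ (k - n) / (n ! * (k - n)! * r ^ n)) := by
  have hrpow : (1 / r) ^ (α + n) = (r ^ α)⁻¹ * (r ^ n)⁻¹ := by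
    rw [rpow_add (by positivity), rpow_natCast, one_div, inv_rpow hr.le, inv_pow]
  have hΓ : Gamma α ≠ 0 := (Gamma_pos_of_pos hα).ne'
  have hrα : r ^ α ≠ 0 := (rpow_pos_of_pos hr α).ne'
  rw [Nat.cast_choose ℝ hnk, hrpow, div_rpow hβ hr.le]
  field_simp

theorem statement5_general (k : ℕ) (s : ℝ) (α β : ℝ) (hα : 0 < α) (hβ : 0 < β) :
    ∫ b in Set.Ioi (0 : ℝ),
        (Real.exp (-(s + b)) * (s + b) ^ k / (k.factorial : ℝ)) *
          (β ^ α / Real.Gamma α * b ^ (α - 1) * Real.exp (-β * b)) =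
      (β / (1 + β)) ^ α * Real.exp (-s) * f s k α β := by
  have hr : (0 : ℝ) < 1 + β := by linarith
  simp only [poisson_mul_gamma_eq]
  rw [integral_const_mul, integral_add_pow_mul_rpow_mul_exp_neg_mul_Ioi s k hα hr, f, mul_sum,
    mul_sum]
  refine sum_congr rfl fun n hn => ?_
  rw [mul_assoc, choose_mul_rpow_mul_Gamma_eq (mem_range_succ_iff.mp hn) s hα hβ.le hr]
  ring

theorem statement5 (k : ℕ) (s : ℝ) (hs : 0 ≤ s) (α β : ℝ) (hα : 0 < α) (hβ : 0 < β) :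
    ∫ b in Set.Ioi (0 : ℝ),
        (Real.exp (-(s + b)) * (s + b) ^ k / (k.factorial : ℝ)) *
          (β ^ α / Real.Gamma α * b ^ (α - 1) * Real.exp (-β * b)) =
      (β / (1 + β)) ^ α * Real.exp (-s) * f s k α β :=
  statement5_general k s α β hα hβ
end

section
/- For every integer n ≥ 1, every real s ≥ 0, and all real α > 0, β > 0, the expectation of f^{(n)}/f under the marginal model equals one: ∑_{k=0}^∞ p(k|s) · f^{(n)}(s;k,α,β)/f(s;k,α,β) = 1, where f^{(n)}(s;k,α,β) equals 0 for k < n and f(s;k−n,α,β) for k ≥ n. (Here f(s;k,α,β) > 0 for s ≥ 0, so the ratio is well defined.) -/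
/-- The marginal model `p(k|s) = (β/(1+β))^α · e^{−s} · f(s;k,α,β)`. -/
noncomputable def p (s : ℝ) (k : ℕ) (α β : ℝ) : ℝ :=
  (β / (1 + β)) ^ α * Real.exp (-s) * f s k α β

theorem Real.Gamma_add_nat_div_Gamma {α : ℝ} (hα : ∀ m : ℕ, α ≠ -m) (n : ℕ) :
    Gamma (α + n) / Gamma α = (ascPochhammer ℝ n).eval α := by
  induction n with
  | zero => simp [Gamma_ne_zero hα]
  | succ n ih =>
    have hn : α + n ≠ 0 := fun h => hα n (by linarith)
    rw [ascPochhammer_succ_eval, ← ih, Nat.cast_succ, ← add_assoc, Gamma_add_one hn]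
    ring

theorem Ring.choose_add_nat_sub_one_mul_factorial (α : ℝ) (n : ℕ) :
    choose (α + n - 1) n * n.factorial = (ascPochhammer ℝ n).eval α := by
  rw [← multichoose_eq, ← Polynomial.ascPochhammer_smeval_eq_eval,
    ← factorial_nsmul_multichoose_eq_ascPochhammer, nsmul_eq_mul, mul_comm]

theorem Real.hasSum_Gamma_add_div_Gamma_mul_pow_div_factorial {α x : ℝ}
    (hα : ∀ m : ℕ, α ≠ -m) (hx : |x| < 1) :
    HasSum (fun n : ℕ => Gamma (α + n) / Gamma α * x ^ n / n.factorial) ((1 - x) ^ (-α)) := by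
  have hx_mem : x ∈ Metric.eball (0 : ℝ) 1 := by
    simpa [Metric.mem_eball, edist_dist, Real.dist_eq] using hx
  have hbinom := (one_div_one_sub_rpow_hasFPowerSeriesOnBall_zero α).hasSum hx_mem
  simp only [FormalMultilinearSeries.ofScalars_apply_eq, smul_eq_mul, zero_add, one_div]
    at hbinom
  rw [rpow_neg (by linarith [le_abs_self x])]
  refine hbinom.congr_fun fun n => ?_
  rw [Gamma_add_nat_div_Gamma hα, ← Ring.choose_add_nat_sub_one_mul_factorial]
  field_simp

theorem f_pos {s α β : ℝ} (hs : 0 ≤ s) (hα : 0 < α) (hβ : -1 < β) (k : ℕ) :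
    0 < f s k α β := by
  have hΓα := Real.Gamma_pos_of_pos hα
  have hΓ (n : ℕ) : 0 < Real.Gamma (α + n) := Real.Gamma_pos_of_pos (by positivity)
  have hβ' : 0 < 1 + β := by linarith
  refine Finset.sum_pos' (fun n _ => ?_) ⟨k, Finset.self_mem_range_succ k, ?_⟩
  · have := hΓ n
    positivity
  · have := hΓ k
    simp only [Nat.sub_self, pow_zero, Nat.factorial_zero]
    positivity

theorem hasSum_f (s : ℝ) {α β : ℝ} (hα : 0 < α) (hβ : 0 < β) :
    HasSum (fun k => f s k α β) (Real.exp s * (β / (1 + β)) ^ (-α)) := by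
  set x : ℝ := (1 + β)⁻¹
  have hx0 : 0 ≤ x := by positivity
  have hx1 : x < 1 := inv_lt_one_of_one_lt₀ (by linarith)
  have h1x : 1 - x = β / (1 + β) := by simp only [x]; field_simp; ring
  set a : ℕ → ℝ := fun n => Real.Gamma (α + n) / Real.Gamma α * x ^ n / n.factorial
  set b : ℕ → ℝ := fun j => s ^ j / j.factorial
  have ha : HasSum a ((β / (1 + β)) ^ (-α)) := h1x ▸
    Real.hasSum_Gamma_add_div_Gamma_mul_pow_div_factorial
      (fun m => by have : (0 : ℝ) ≤ m := m.cast_nonneg; linarith) (abs_lt.2 ⟨by linarith, hx1⟩)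
  have hb : HasSum b (Real.exp s) := by
    rw [Real.exp_eq_exp_ℝ]; exact NormedSpace.expSeries_div_hasSum_exp s
  have ha_norm : Summable fun n => ‖a n‖ := by
    refine ha.summable.congr fun n => (Real.norm_of_nonneg ?_).symm
    have := Real.Gamma_pos_of_pos (by positivity : 0 < α + n)
    have := Real.Gamma_pos_of_pos hα
    positivity
  have hb_norm : Summable fun j => ‖b j‖ := by
    simpa [b, norm_div, norm_pow] using Real.summable_pow_div_factorial |s|
  have hab := hasSum_sum_range_mul_of_summable_norm ha_norm hb_norm
  rw [ha.tsum_eq, hb.tsum_eq, mul_comm] at hab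
  refine hab.congr_fun fun k => Finset.sum_congr rfl fun n _ => ?_
  simp only [a, b, x, inv_pow]
  field_simp

theorem hasSum_p (s : ℝ) {α β : ℝ} (hα : 0 < α) (hβ : 0 < β) :
    HasSum (fun k => p s k α β) 1 := by
  have hq : 0 < (β / (1 + β)) ^ α := Real.rpow_pos_of_pos (by positivity) α
  have hmass : (β / (1 + β)) ^ α * Real.exp (-s) * (Real.exp s * (β / (1 + β)) ^ (-α)) = 1 := by
    rw [Real.rpow_neg (by positivity), Real.exp_neg]
    field_simp
  exact hmass ▸ (hasSum_f s hα hβ).mul_left ((β / (1 + β)) ^ α * Real.exp (-s))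

theorem statement6_general (n : ℕ) (s : ℝ) (hs : 0 ≤ s) (α β : ℝ)
    (hα : 0 < α) (hβ : 0 < β) :
    HasSum (fun k : ℕ =>
      p s k α β * ((if k < n then 0 else f s (k - n) α β) / f s k α β)) 1 := by
  have hterm (k : ℕ) : p s k α β * ((if k < n then 0 else f s (k - n) α β) / f s k α β)
      = if k < n then 0 else p s (k - n) α β := by
    split_ifs
    · simp
    · have := (f_pos hs hα (by linarith) k).ne'
      simp only [p]
      field_simp
  rw [funext hterm, ← hasSum_nat_add_iff' n,
    Finset.sum_eq_zero fun i hi => if_pos (Finset.mem_range.1 hi), sub_zero]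
  simpa using hasSum_p s hα hβ

theorem statement6 (n : ℕ) (hn : 1 ≤ n) (s : ℝ) (hs : 0 ≤ s) (α β : ℝ)
    (hα : 0 < α) (hβ : 0 < β) :
    HasSum (fun k : ℕ =>
      p s k α β * ((if k < n then 0 else f s (k - n) α β) / f s k α β)) 1 :=
  statement6_general n s hs α β hα hβ
end

section
/- For every real s ≥ 0, every real b₀ > 0, and every integer k ≥ 0, the function α ↦ f(s;k,α,α/b₀) tends to (s+b₀)^k / k! as the real parameter α tends to infinity; that is, in the limit in which the Gamma background prior with shape α and rate β = α/b₀ degenerates to a point mass at b₀, the polynomial f(s;k,α,β) converges to the Poisson kernel (s+b₀)^k/k!. -/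
/-!
With `β = α / b₀`, the `n`-th term of `f` carries the factor
`Γ(α + n) / (Γ(α) (1 + α/b₀)^n) = ∏_{i < n} (α + i) / (1 + α/b₀)`, and each of these `n`
factors tends to `b₀`. The limit of `f` is therefore the binomial expansion
`∑ b₀^n s^(k-n) / (n! (k-n)!) = (s + b₀)^k / k!`.
-/

open Filter Topology Finset

lemma Real.Gamma_add_nat_eq_prod_mul_Gamma {α : ℝ} (hα : 0 < α) (n : ℕ) :
    Real.Gamma (α + n) = (∏ i ∈ range n, (α + i)) * Real.Gamma α := by
  induction n with
  | zero => simp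
  | succ m ih =>
    rw [Nat.cast_succ, ← add_assoc, Real.Gamma_add_one (by positivity), ih, prod_range_succ]
    ring

lemma tendsto_add_div_one_add_div_atTop {b : ℝ} (hb : b ≠ 0) (c : ℝ) :
    Tendsto (fun α : ℝ => (α + c) / (1 + α / b)) atTop (𝓝 b) := by
  have hlim : Tendsto (fun α : ℝ => (1 + c * α⁻¹) / (α⁻¹ + b⁻¹)) atTop
      (𝓝 ((1 + c * 0) / (0 + b⁻¹))) :=
    (tendsto_const_nhds.add (tendsto_const_nhds.mul tendsto_inv_atTop_zero)).div
      (tendsto_inv_atTop_zero.add tendsto_const_nhds) (by simpa using hb)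
  rw [mul_zero, add_zero, zero_add, one_div, inv_inv] at hlim
  refine hlim.congr' ?_
  filter_upwards [eventually_gt_atTop 0] with α hα
  field_simp

lemma tendsto_Gamma_add_nat_div_Gamma_div_pow {b : ℝ} (hb : b ≠ 0) (n : ℕ) :
    Tendsto (fun α : ℝ => Real.Gamma (α + n) / Real.Gamma α / (1 + α / b) ^ n) atTop
      (𝓝 (b ^ n)) := by
  have hprod : Tendsto (fun α : ℝ => ∏ i ∈ range n, (α + i) / (1 + α / b)) atTop
      (𝓝 (∏ _i ∈ range n, b)) :=
    tendsto_finsetProd _ fun i _ => tendsto_add_div_one_add_div_atTop hb i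
  rw [prod_const, card_range] at hprod
  refine hprod.congr' ?_
  filter_upwards [eventually_gt_atTop 0] with α hα
  rw [Real.Gamma_add_nat_eq_prod_mul_Gamma hα,
    mul_div_cancel_right₀ _ (Real.Gamma_pos_of_pos hα).ne', prod_div_distrib, prod_const, card_range]

lemma sum_pow_mul_pow_div_factorial_mul_factorial (s b : ℝ) (k : ℕ) :
    ∑ n ∈ range (k + 1), b ^ n * s ^ (k - n) / ((n.factorial : ℝ) * ((k - n).factorial : ℝ)) =
      (s + b) ^ k / k.factorial := by
  rw [add_comm s b, add_pow, sum_div]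
  refine sum_congr rfl fun n hn => ?_
  rw [Nat.cast_choose ℝ (Nat.lt_succ_iff.mp (mem_range.mp hn))]
  field_simp

theorem statement15_general (s : ℝ) (b₀ : ℝ) (hb₀ : 0 < b₀) (k : ℕ) :
    Filter.Tendsto (fun α : ℝ => f s k α (α / b₀)) Filter.atTop
      (nhds ((s + b₀) ^ k / (k.factorial : ℝ))) := by
  rw [← sum_pow_mul_pow_div_factorial_mul_factorial]
  refine tendsto_finsetSum _ fun n _ => ?_
  have hterm := (tendsto_Gamma_add_nat_div_Gamma_div_pow hb₀.ne' n).mul_const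
    (s ^ (k - n) / ((n.factorial : ℝ) * ((k - n).factorial : ℝ)))
  rw [mul_div_assoc]
  refine hterm.congr fun α => ?_
  ring

theorem statement15 (s : ℝ) (hs : 0 ≤ s) (b₀ : ℝ) (hb₀ : 0 < b₀) (k : ℕ) :
    Filter.Tendsto (fun α : ℝ => f s k α (α / b₀)) Filter.atTop
      (nhds ((s + b₀) ^ k / (k.factorial : ℝ))) :=
  statement15_general s b₀ hb₀ k
end
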